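/- Let S and A be positive integers, γ ∈ (0,1), P ∈ ℝ^{SA×S} row-stochastic, ρ ∈ ℝ^S a probability vector, Ξ = 1_A ⊗ I_S, c ∈ ℝ^{SA}, σ > 0, w ∈ ℝ^{SA}, and let D be the occupancy polytope. Define κ(V,φ) = −(σ/2)‖c + γPV − ΞV − φ‖² + w^⊤(c + γPV − ΞV − φ) + (1−γ)ρ^⊤V. If (V*, φ*) with φ* ≥ 0 maximizes κ over ℝ^S × {φ ≥ 0}, then the vector d* = σ·max(−c − γPV* + ΞV* + w/σ, 0) (componentwise maximum with zero) is the unique minimizer of d ↦ c^⊤ d + (1/(2σ))‖d − w‖² over D. -/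
import Mathlib

open Matrix Filter Topology

noncomputable def eucNorm {ι : Type*} [Fintype ι] (x : ι → ℝ) : ℝ :=
  Real.sqrt (∑ i, x i ^ 2)

def RowStochastic {m n : Type*} [Fintype n] (P : Matrix m n ℝ) : Prop :=
  (∀ i j, 0 ≤ P i j) ∧ ∀ i, ∑ j, P i j = 1

def Xi (S A : ℕ) : Matrix (Fin S × Fin A) (Fin S) ℝ :=
  Matrix.of fun p s' => if p.1 = s' then 1 else 0

def OccD (S A : ℕ) (γ : ℝ) (P : Matrix (Fin S × Fin A) (Fin S) ℝ)
    (ρ : Fin S → ℝ) : Set ((Fin S × Fin A) → ℝ) :=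
  {d | (∀ p, 0 ≤ d p) ∧
    ∀ s, ∑ a, d (s, a) = (1 - γ) * ρ s + γ * ∑ p : Fin S × Fin A, P p s * d p}

noncomputable def kappa (S A : ℕ) (γ σ : ℝ) (P : Matrix (Fin S × Fin A) (Fin S) ℝ)
    (ρ : Fin S → ℝ) (c w : (Fin S × Fin A) → ℝ)
    (V : Fin S → ℝ) (φ : (Fin S × Fin A) → ℝ) : ℝ :=
  -(σ / 2) * eucNorm (c + γ • P.mulVec V - (Xi S A).mulVec V - φ) ^ 2
    + ∑ p, w p * (c + γ • P.mulVec V - (Xi S A).mulVec V - φ) p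
    + (1 - γ) * ∑ s, ρ s * V s

noncomputable def regObj {ι : Type*} [Fintype ι] (σ : ℝ) (c w d : ι → ℝ) : ℝ :=
  (∑ p, c p * d p) + (1 / (2 * σ)) * eucNorm (d - w) ^ 2

/- ===== auxiliary lemmas ===== -/

lemma eucNormSq {ι : Type*} [Fintype ι] (x : ι → ℝ) : eucNorm x ^ 2 = ∑ i, x i ^ 2 := by
  rw [eucNorm, Real.sq_sqrt]; positivity

lemma quadZero (b K : ℝ) (hK : 0 ≤ K) (h : ∀ t : ℝ, b * t ≤ K * t ^ 2) : b = 0 := by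
  have h2 : (0:ℝ) < 2*K+1 := by linarith
  set t := b / (2*K+1) with htd
  have ht : (2*K+1) * t = b := by rw [htd]; field_simp
  have h1 := h t
  have hbt : b*t = (2*K+1)*t^2 := by rw [← ht]; ring
  have h3 : (K+1) * t^2 ≤ 0 := by nlinarith
  have h4 : t = 0 := by nlinarith [sq_nonneg t]
  rw [← ht, h4, mul_zero]

lemma quadNonpos (b K : ℝ) (hK : 0 ≤ K) (h : ∀ t : ℝ, 0 ≤ t → b * t ≤ K * t ^ 2) : b ≤ 0 := by
  by_contra hb
  push_neg at hb
  have h2 : (0:ℝ) < 2*K+1 := by linarith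
  set t := b / (2*K+1) with htd
  have ht : (2*K+1) * t = b := by rw [htd]; field_simp
  have ht0 : 0 < t := div_pos hb h2
  have h1 := h t ht0.le
  have hbt : b*t = (2*K+1)*t^2 := by rw [← ht]; ring
  nlinarith [sq_nonneg t]

lemma quadNonneg (b K ε : ℝ) (hK : 0 ≤ K) (hε : 0 < ε)
    (h : ∀ t : ℝ, -ε ≤ t → t ≤ 0 → b * t ≤ K * t ^ 2) : 0 ≤ b := by
  by_contra hb
  push_neg at hb
  have h2 : (0:ℝ) < 2*K+1 := by linarith
  set m := min ε ((-b) / (2*K+1)) with hm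
  have hm0 : 0 < m := lt_min hε (div_pos (by linarith) h2)
  have hmε : m ≤ ε := min_le_left _ _
  have hmb : m * (2*K+1) ≤ -b := by
    rw [← le_div_iff₀ h2]; exact min_le_right _ _
  have h1 := h (-m) (by linarith) (by linarith)
  nlinarith [mul_le_mul_of_nonneg_left hmb hm0.le]

lemma Xi_mulVec {S A : ℕ} (V : Fin S → ℝ) (p : Fin S × Fin A) :
    (Xi S A).mulVec V p = V p.1 := by
  simp [Xi, Matrix.mulVec, dotProduct, ite_mul]

lemma ind_sum {S A : ℕ} (s : Fin S) (d : Fin S × Fin A → ℝ) :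
    ∑ p : Fin S × Fin A, (if p.1 = s then 1 else 0) * d p = ∑ a, d (s, a) := by
  rw [Fintype.sum_prod_type]
  simp [ite_mul, Finset.sum_ite_eq]

lemma sum_sq_add {ι : Type*} [Fintype ι] (x e : ι → ℝ) (t : ℝ) :
    ∑ i, (x i + t * e i)^2 = ∑ i, x i^2 + 2*t*(∑ i, x i * e i) + t^2 * ∑ i, e i^2 := by
  rw [Finset.mul_sum, Finset.mul_sum, ← Finset.sum_add_distrib, ← Finset.sum_add_distrib]
  exact Finset.sum_congr rfl fun i _ => by ring

lemma sum_mul_add {ι : Type*} [Fintype ι] (w x e : ι → ℝ) (t : ℝ) :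
    ∑ i, w i * (x i + t * e i) = ∑ i, w i * x i + t * ∑ i, w i * e i := by
  rw [Finset.mul_sum, ← Finset.sum_add_distrib]
  exact Finset.sum_congr rfl fun i _ => by ring

/-- if (V*, φ*) with φ* ≥ 0 maximizes the dual function κ,
then d* = σ·max(−c − γPV* + ΞV* + w/σ, 0) is the unique minimizer of the
regularized objective over the occupancy polytope. -/
theorem primal_recovery_from_dual
    (S A : ℕ) (hS : 0 < S) (hA : 0 < A)
    (γ : ℝ) (hγ0 : 0 < γ) (hγ1 : γ < 1)
    (P : Matrix (Fin S × Fin A) (Fin S) ℝ) (hP : RowStochastic P)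
    (ρ : Fin S → ℝ) (hρ0 : ∀ s, 0 ≤ ρ s) (hρ1 : ∑ s, ρ s = 1)
    (c : (Fin S × Fin A) → ℝ) (σ : ℝ) (hσ : 0 < σ) (w : (Fin S × Fin A) → ℝ)
    (Vstar : Fin S → ℝ) (φstar : (Fin S × Fin A) → ℝ)
    (hφstar : ∀ p, 0 ≤ φstar p)
    (hmax : ∀ (V : Fin S → ℝ) (φ : (Fin S × Fin A) → ℝ), (∀ p, 0 ≤ φ p) →
      kappa S A γ σ P ρ c w V φ ≤ kappa S A γ σ P ρ c w Vstar φstar)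
    (dstar : (Fin S × Fin A) → ℝ)
    (hdstar : dstar = σ • fun p =>
      max ((-c - γ • P.mulVec Vstar + (Xi S A).mulVec Vstar + (1 / σ) • w) p) 0) :
    dstar ∈ OccD S A γ P ρ ∧
      ∀ d ∈ OccD S A γ P ρ, d ≠ dstar →
        regObj σ c w dstar < regObj σ c w d := by
  classical
  set r : (Fin S × Fin A) → ℝ :=
    fun p => c p + γ * P.mulVec Vstar p - Vstar p.1 - φstar p with hrdef
  -- pointwise value of the kappa vector at the maximizer
  have hvec0 : ∀ p, (c + γ • P.mulVec Vstar - (Xi S A).mulVec Vstar - φstar) p = r p := by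
    intro p
    simp [hrdef, Xi_mulVec]
  have hkbase : kappa S A γ σ P ρ c w Vstar φstar
      = -(σ/2) * (∑ p, r p ^ 2) + (∑ p, w p * r p) + (1-γ) * ∑ s, ρ s * Vstar s := by
    rw [kappa, eucNormSq]
    simp only [hvec0]
  -- φ-direction first-order conditions
  have hphi : ∀ (p : Fin S × Fin A) (t : ℝ), -φstar p ≤ t →
      (σ * r p - w p) * t ≤ (σ/2) * t ^ 2 := by
    intro p t ht
    set φt := Function.update φstar p (φstar p + t) with hφt
    have hnn : ∀ p', 0 ≤ φt p' := by
      intro p'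
      rcases eq_or_ne p' p with h | h
      · subst h; rw [hφt, Function.update_self]; linarith
      · rw [hφt, Function.update_of_ne h]; exact hφstar p'
    have h1 := hmax Vstar φt hnn
    have hv : ∀ p', (c + γ • P.mulVec Vstar - (Xi S A).mulVec Vstar - φt) p'
        = r p' + (-t) * (if p' = p then 1 else 0) := by
      intro p'
      rcases eq_or_ne p' p with h | h
      · subst h
        simp [hφt, Function.update_self, hrdef, Xi_mulVec]
        try ring
      · simp [hφt, Function.update_of_ne h, hrdef, Xi_mulVec, h]
    have e1 : kappa S A γ σ P ρ c w Vstar φt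
        = -(σ/2) * ((∑ p', r p' ^ 2) + 2*(-t)*(∑ p', r p' * (if p' = p then 1 else 0))
            + (-t)^2 * ∑ p', (if p' = p then (1:ℝ) else 0) ^ 2)
          + ((∑ p', w p' * r p') + (-t) * ∑ p', w p' * (if p' = p then 1 else 0))
          + (1-γ) * ∑ s, ρ s * Vstar s := by
      rw [kappa, eucNormSq]
      simp only [hv]
      rw [sum_sq_add, sum_mul_add]
      try ring
    have hs1 : ∑ p', r p' * (if p' = p then (1:ℝ) else 0) = r p := by
      simp [mul_ite]
    have hs2 : ∑ p', (if p' = p then (1:ℝ) else 0) ^ 2 = 1 := by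
      simp [ite_pow]
    have hs3 : ∑ p', w p' * (if p' = p then (1:ℝ) else 0) = w p := by
      simp [mul_ite]
    rw [e1, hs1, hs2, hs3, hkbase] at h1
    nlinarith [h1]
  have hA1 : ∀ p, σ * r p ≤ w p := by
    intro p
    have h := quadNonpos (σ * r p - w p) (σ/2) (by positivity)
      (fun t ht => hphi p t (by linarith [hφstar p]))
    linarith
  have hA2 : ∀ p, 0 < φstar p → σ * r p = w p := by
    intro p hp
    have h := quadNonneg (σ * r p - w p) (σ/2) (φstar p) (by positivity) hp
      (fun t h1 h2 => hphi p t (by linarith))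
    have h2 := hA1 p
    linarith
  -- V-direction first-order conditions
  set mfun : Fin S → (Fin S × Fin A) → ℝ :=
    fun s p => γ * P p s - (if p.1 = s then 1 else 0) with hmfun
  have hVdir : ∀ s : Fin S,
      (∑ p, (w p - σ * r p) * mfun s p) + (1-γ) * ρ s = 0 := by
    intro s
    apply quadZero _ ((σ/2) * ∑ p, mfun s p ^ 2)
      (by positivity)
    intro t
    set es : Fin S → ℝ := fun s' => if s' = s then 1 else 0 with hes
    have hmv : ∀ p', P.mulVec (Vstar + t • es) p' = P.mulVec Vstar p' + t * P p' s := by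
      intro p'
      simp [hes, Matrix.mulVec, dotProduct, mul_add, Finset.sum_add_distrib, mul_ite,
        mul_comm, Finset.sum_ite_eq', Finset.mul_sum]
    have hv : ∀ p', (c + γ • P.mulVec (Vstar + t • es) - (Xi S A).mulVec (Vstar + t • es)
        - φstar) p' = r p' + t * mfun s p' := by
      intro p'
      simp only [Pi.add_apply, Pi.sub_apply, Pi.smul_apply, smul_eq_mul, Xi_mulVec, hmv]
      rcases eq_or_ne p'.1 s with h | h <;> simp [hrdef, hmfun, hes, h] <;> ring
    have h1 := hmax (Vstar + t • es) φstar hφstar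
    have e1 : kappa S A γ σ P ρ c w (Vstar + t • es) φstar
        = -(σ/2) * ((∑ p, r p ^ 2) + 2*t*(∑ p, r p * mfun s p) + t^2 * ∑ p, mfun s p ^ 2)
          + ((∑ p, w p * r p) + t * ∑ p, w p * mfun s p)
          + (1-γ) * ((∑ s', ρ s' * Vstar s') + t * ρ s) := by
      rw [kappa, eucNormSq]
      simp only [hv]
      rw [sum_sq_add, sum_mul_add]
      have : ∑ s', ρ s' * (Vstar + t • es) s' = (∑ s', ρ s' * Vstar s') + t * ρ s := by
        simp only [Pi.add_apply, Pi.smul_apply, smul_eq_mul]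
        rw [sum_mul_add]
        simp [hes, mul_ite]
      rw [this]
    rw [e1, hkbase] at h1
    have hsplit : ∑ p, (w p - σ * r p) * mfun s p
        = (∑ p, w p * mfun s p) - σ * ∑ p, r p * mfun s p := by
      rw [Finset.mul_sum, ← Finset.sum_sub_distrib]
      exact Finset.sum_congr rfl fun p _ => by ring
    rw [hsplit]
    nlinarith [h1]
  -- d* in closed form
  have hds : ∀ p, dstar p = w p - σ * r p := by
    intro p
    have hq : (-c - γ • P.mulVec Vstar + (Xi S A).mulVec Vstar + (1/σ) • w) p
        = -(c p + γ * P.mulVec Vstar p - Vstar p.1) + w p / σ := by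
      simp [Xi_mulVec]
      ring
    rw [hdstar]
    simp only [Pi.smul_apply, smul_eq_mul]
    rw [hq]
    rcases eq_or_lt_of_le (hφstar p) with h | h
    · have hr : r p = c p + γ * P.mulVec Vstar p - Vstar p.1 := by
        simp [hrdef, ← h]
      have harg : 0 ≤ -(c p + γ * P.mulVec Vstar p - Vstar p.1) + w p / σ := by
        rw [← hr]
        have h2 : r p ≤ w p / σ := by
          rw [le_div_iff₀ hσ]
          nlinarith [hA1 p]
        linarith
      rw [max_eq_left harg, ← hr]
      field_simp
      ring
    · have heq := hA2 p h
      have harg : -(c p + γ * P.mulVec Vstar p - Vstar p.1) + w p / σ ≤ 0 := by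
        have hr : c p + γ * P.mulVec Vstar p - Vstar p.1 = r p + φstar p := by
          have : r p = c p + γ * P.mulVec Vstar p - Vstar p.1 - φstar p := rfl
          rw [this]; ring
        rw [hr]
        have : w p / σ = r p := by
          rw [div_eq_iff hσ.ne']
          linarith [heq]
        rw [this]
        linarith
      rw [max_eq_right harg, mul_zero]
      linarith [heq]
  have hd0 : ∀ p, 0 ≤ dstar p := by
    intro p
    rw [hds p]
    linarith [hA1 p]
  have hcomp : ∑ p, φstar p * dstar p = 0 := by
    apply Finset.sum_eq_zero
    intro p _
    rcases eq_or_lt_of_le (hφstar p) with h | h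
    · rw [← h, zero_mul]
    · rw [hds p]
      have := hA2 p h
      rw [show w p - σ * r p = 0 by linarith, mul_zero]
  -- membership
  have hflow : ∀ s, ∑ a, dstar (s,a) = (1-γ) * ρ s + γ * ∑ p, P p s * dstar p := by
    intro s
    have h0 := hVdir s
    have h1 : ∑ p, (w p - σ * r p) * mfun s p
        = γ * (∑ p, P p s * dstar p) - ∑ p, (if p.1 = s then (1:ℝ) else 0) * dstar p := by
      rw [Finset.mul_sum, ← Finset.sum_sub_distrib]
      refine Finset.sum_congr rfl fun p _ => ?_
      rw [hds p, hmfun]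
      ring
    rw [ind_sum s dstar] at h1
    linarith [h0, h1]
  have hmem : dstar ∈ OccD S A γ P ρ := ⟨hd0, hflow⟩
  refine ⟨hmem, ?_⟩
  -- optimality
  intro d hd hne
  obtain ⟨hd0', hdflow⟩ := hd
  have hlin : ∀ e : (Fin S × Fin A) → ℝ, e ∈ OccD S A γ P ρ →
      ∑ p, (Vstar p.1 - γ * P.mulVec Vstar p) * e p = (1-γ) * ∑ s, ρ s * Vstar s := by
    intro e he
    have h1 : ∑ p, (Vstar p.1 - γ * P.mulVec Vstar p) * e p
        = ∑ s, Vstar s * ((∑ a, e (s,a)) - γ * ∑ p, P p s * e p) := by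
      have ha : ∑ p : Fin S × Fin A, Vstar p.1 * e p = ∑ s, Vstar s * ∑ a, e (s,a) := by
        rw [Fintype.sum_prod_type]
        exact Finset.sum_congr rfl fun s' _ => by rw [Finset.mul_sum]
      have hb : ∑ p : Fin S × Fin A, P.mulVec Vstar p * e p
          = ∑ s, Vstar s * ∑ p, P p s * e p := by
        simp only [Matrix.mulVec, dotProduct]
        calc ∑ x : Fin S × Fin A, (∑ s', P x s' * Vstar s') * e x
            = ∑ x : Fin S × Fin A, ∑ s', P x s' * Vstar s' * e x := by
              exact Finset.sum_congr rfl fun x _ => by rw [Finset.sum_mul]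
          _ = ∑ s', ∑ x : Fin S × Fin A, P x s' * Vstar s' * e x := Finset.sum_comm
          _ = ∑ s', Vstar s' * ∑ x, P x s' * e x := by
              refine Finset.sum_congr rfl fun s' _ => ?_
              rw [Finset.mul_sum]
              exact Finset.sum_congr rfl fun x _ => by ring
      calc ∑ p, (Vstar p.1 - γ * P.mulVec Vstar p) * e p
          = ∑ p : Fin S × Fin A, (Vstar p.1 * e p - γ * (P.mulVec Vstar p * e p)) := by
            exact Finset.sum_congr rfl fun p _ => by ring
        _ = (∑ p : Fin S × Fin A, Vstar p.1 * e p)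
            - γ * ∑ p : Fin S × Fin A, P.mulVec Vstar p * e p := by
            rw [Finset.sum_sub_distrib, Finset.mul_sum]
        _ = (∑ s, Vstar s * ∑ a, e (s,a)) - γ * ∑ s, Vstar s * ∑ p, P p s * e p := by
            rw [ha, hb]
        _ = ∑ s, Vstar s * ((∑ a, e (s,a)) - γ * ∑ p, P p s * e p) := by
            rw [Finset.mul_sum, ← Finset.sum_sub_distrib]
            exact Finset.sum_congr rfl fun s _ => by ring
    rw [h1]
    rw [Finset.mul_sum]
    refine Finset.sum_congr rfl fun s _ => ?_
    rw [he.2 s]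
    ring
  -- key quadratic expansion of the objective difference
  have hterm : ∀ p, c p * d p + (1/(2*σ))*(d p - w p)^2
      - (c p * dstar p + (1/(2*σ))*(dstar p - w p)^2)
      = (c p - r p)*(d p - dstar p) + (1/(2*σ))*(d p - dstar p)^2 := by
    intro p
    rw [hds p]
    field_simp
    ring
  have hkey : regObj σ c w d - regObj σ c w dstar
      = (∑ p, (c p - r p)*(d p - dstar p)) + (1/(2*σ)) * ∑ p, (d p - dstar p)^2 := by
    rw [regObj, regObj, eucNormSq, eucNormSq]
    simp only [Pi.sub_apply]
    rw [Finset.mul_sum, Finset.mul_sum, ← Finset.sum_add_distrib, ← Finset.sum_add_distrib,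
      ← Finset.sum_sub_distrib]
    rw [show (∑ p, (c p - r p)*(d p - dstar p)) + (1/(2*σ)) * ∑ p, (d p - dstar p)^2
        = ∑ p, ((c p - r p)*(d p - dstar p) + (1/(2*σ))*(d p - dstar p)^2) from by
      rw [Finset.mul_sum, ← Finset.sum_add_distrib]]
    exact Finset.sum_congr rfl fun p _ => hterm p
  have hlinsplit : ∑ p, (c p - r p)*(d p - dstar p)
      = ((∑ p, (Vstar p.1 - γ * P.mulVec Vstar p) * d p)
         - ∑ p, (Vstar p.1 - γ * P.mulVec Vstar p) * dstar p)
        + ((∑ p, φstar p * d p) - ∑ p, φstar p * dstar p) := by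
    rw [← Finset.sum_sub_distrib, ← Finset.sum_sub_distrib, ← Finset.sum_add_distrib]
    refine Finset.sum_congr rfl fun p _ => ?_
    have hcr : r p = c p + γ * P.mulVec Vstar p - Vstar p.1 - φstar p := rfl
    rw [hcr]
    ring
  have h5 := hlin d ⟨hd0', hdflow⟩
  have h6 := hlin dstar hmem
  have h7 : 0 ≤ ∑ p, φstar p * d p :=
    Finset.sum_nonneg fun p _ => mul_nonneg (hφstar p) (hd0' p)
  have hex : ∃ p, d p ≠ dstar p := by
    by_contra hc
    push_neg at hc
    exact hne (funext hc)
  obtain ⟨p0, hp0⟩ := hex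
  have h8 : 0 < ∑ p, (d p - dstar p)^2 := by
    refine Finset.sum_pos' (fun i _ => sq_nonneg _) ⟨p0, Finset.mem_univ p0, ?_⟩
    have := sub_ne_zero_of_ne hp0
    positivity
  have h9 : 0 < 1/(2*σ) := by positivity
  rw [hlinsplit, h5, h6, hcomp] at hkey
  nlinarith [mul_pos h9 h8]
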